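/- Suppose k^2 < 2n and define Wg(π) = n^{-k} Σ_{r≥0} (-1)^r c_r(π)/n^r, where c_r(π) is the number of sequences (s_1,...,s_r,t_1,...,t_r) with 1 ≤ s_i < t_i ≤ k, t_1 ≤ ⋯ ≤ t_r, and π = (s_1 t_1)⋯(s_r t_r). Then for any π ∈ S_k with π ≠ id, |Wg(π)| ≤ (2/(n^k k^2)) · (k^2/(2n))^{|π|} · 1/(1 - k^2/(2n)). -/

import Mathlib

/-- Minimal number of transpositions needed to write a permutation. -/
noncomputable def transLen {α : Type*} [DecidableEq α] (π : Equiv.Perm α) : ℕ :=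
  sInf {r | ∃ l : List (Equiv.Perm α), l.length = r ∧ (∀ τ ∈ l, τ.IsSwap) ∧ l.prod = π}

/-- Number of sequences `(s₁,…,s_r,t₁,…,t_r)` with `sᵢ < tᵢ`, `t₁ ≤ ⋯ ≤ t_r` and
`π = (s₁ t₁)⋯(s_r t_r)`. -/
noncomputable def factorCount (k r : ℕ) (π : Equiv.Perm (Fin k)) : ℕ :=
  Nat.card {p : Fin r → Fin k × Fin k //
    (∀ i, (p i).1 < (p i).2) ∧
    (∀ i j : Fin r, i ≤ j → (p i).2 ≤ (p j).2) ∧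
    (List.ofFn fun i => Equiv.swap (p i).1 (p i).2).prod = π}

/-- The Weingarten function `Wg(π) = n^{-k} Σ_{r≥0} (-1)^r c_r(π)/n^r`. -/
noncomputable def Wg (n k : ℕ) (π : Equiv.Perm (Fin k)) : ℝ :=
  (1 / (n : ℝ) ^ k) * ∑' r : ℕ, (-1 : ℝ) ^ r * (factorCount k r π : ℝ) / (n : ℝ) ^ r

/-
A factorization counted by `c_r(π)` is a word of `r` transpositions with product `π`, so
`c_r(π) = 0` for `r < |π|`. Its first letter is determined by the remaining `r - 1` letters and
`π`, and each of those is one of the `k(k-1)/2 ≤ k²/2` transpositions `(s t)`, so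
`c_r(π) ≤ (k²/2)^(r-1)`. Hence the `r`-th term of the series defining `n^k Wg(π)` is at most
`(2/k²) (k²/(2n))^r` in absolute value and vanishes for `r < |π|`; summing this geometric tail
from `r = |π| ≥ 1` gives the bound.
-/

open Finset Equiv

theorem Equiv.swap_eq_swap_iff_of_lt {α : Type*} [LinearOrder α] {a b c d : α}
    (hab : a < b) (hcd : c < d) : swap a b = swap c d ↔ a = c ∧ b = d := by
  refine ⟨fun h => ?_, fun ⟨hac, hbd⟩ => hac ▸ hbd ▸ rfl⟩
  have h_apply : swap c d a = b := by rw [← h, swap_apply_left]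
  rcases eq_or_ne a c with rfl | hac
  · exact ⟨rfl, by rwa [swap_apply_left, eq_comm] at h_apply⟩
  rcases eq_or_ne a d with rfl | had
  · rw [swap_apply_right] at h_apply
    exact absurd (h_apply ▸ hcd.trans hab) (lt_irrefl _)
  · rw [swap_apply_of_ne_of_ne hac had] at h_apply
    exact absurd h_apply hab.ne

theorem Fintype.card_subtype_fst_lt_snd {α : Type*} [LinearOrder α] [Fintype α] :
    Fintype.card {p : α × α // p.1 < p.2} = (Fintype.card α).choose 2 := by
  rw [Fintype.card_subtype, ← card_univ, ← univ_product_univ]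
  exact card_product_filter_lt

theorem transLen_le_length {α : Type*} [DecidableEq α] {π : Perm α} {l : List (Perm α)}
    (hl : ∀ τ ∈ l, τ.IsSwap) (hl_prod : l.prod = π) : transLen π ≤ l.length :=
  Nat.sInf_le ⟨_, rfl, hl, hl_prod⟩

theorem transLen_pos {α : Type*} [DecidableEq α] [Fintype α] {π : Perm α} (hπ : π ≠ 1) :
    0 < transLen π := by
  rw [Nat.pos_iff_ne_zero, transLen, Ne, Nat.sInf_eq_zero, not_or]
  obtain ⟨l, hl_prod, hl⟩ := (Perm.truncSwapFactors π).out
  refine ⟨?_, Set.nonempty_iff_ne_empty.mp ⟨_, l, rfl, hl, hl_prod⟩⟩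
  rintro ⟨l, hl_len, -, hl_prod⟩
  exact hπ (by rw [← hl_prod, List.length_eq_zero_iff.mp hl_len, List.prod_nil])

theorem factorCount_eq_zero_of_lt_transLen {k r : ℕ} {π : Perm (Fin k)} (hr : r < transLen π) :
    factorCount k r π = 0 := by
  refine @Nat.card_of_isEmpty _ ⟨fun ⟨p, hp_lt, _, hp_prod⟩ => hr.not_ge ?_⟩
  refine (transLen_le_length ?_ hp_prod).trans_eq (List.length_ofFn)
  simp only [List.mem_ofFn, forall_exists_index]
  rintro τ i rfl
  exact ⟨_, _, (hp_lt i).ne, rfl⟩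

theorem factorCount_succ_le (k m : ℕ) (π : Perm (Fin k)) :
    factorCount k (m + 1) π ≤ k.choose 2 ^ m := by
  set Factorization := {p : Fin (m + 1) → Fin k × Fin k //
    (∀ i, (p i).1 < (p i).2) ∧
    (∀ i j : Fin (m + 1), i ≤ j → (p i).2 ≤ (p j).2) ∧
    (List.ofFn fun i => swap (p i).1 (p i).2).prod = π}
  let tail : Factorization → Fin m → {p : Fin k × Fin k // p.1 < p.2} :=
    fun p i => ⟨p.1 i.succ, p.2.1 i.succ⟩
  -- the first transposition is `π` times the inverse of the product of the others
  have h_inj : Function.Injective tail := by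
    rintro ⟨p, hp_lt, _, hp_prod⟩ ⟨q, hq_lt, _, hq_prod⟩ h_eq
    have h_tail : Fin.tail p = Fin.tail q :=
      funext fun i => congrArg Subtype.val (congrFun h_eq i)
    have h_succ (i : Fin m) : q i.succ = p i.succ := congrFun h_tail.symm i
    rw [List.ofFn_succ, List.prod_cons] at hp_prod hq_prod
    simp only [h_succ] at hq_prod
    obtain ⟨h1, h2⟩ := (swap_eq_swap_iff_of_lt (hp_lt 0) (hq_lt 0)).mp
      (mul_right_cancel (hp_prod.trans hq_prod.symm))
    rw [Subtype.mk.injEq, ← Fin.cons_self_tail p, ← Fin.cons_self_tail q, h_tail,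
      Prod.ext h1 h2]
  have h_card := Nat.card_le_card_of_injective tail h_inj
  rwa [Nat.card_fun, Nat.card_eq_fintype_card (α := {p : Fin k × Fin k // p.1 < p.2}),
    Fintype.card_subtype_fst_lt_snd, Fintype.card_fin, Nat.card_eq_fintype_card (α := Fin m),
    Fintype.card_fin] at h_card

theorem abs_tsum_le_of_geometric_tail {a : ℕ → ℝ} {C q : ℝ} {ℓ : ℕ} (hq0 : 0 ≤ q) (hq1 : q < 1)
    (h_zero : ∀ r < ℓ, a r = 0) (h_bound : ∀ r, ℓ ≤ r → |a r| ≤ C * q ^ r) :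
    |∑' r, a r| ≤ C * q ^ ℓ / (1 - q) := by
  have h_shift : ∑' i, a (i + ℓ) = ∑' r, a r :=
    (add_left_injective ℓ).tsum_eq fun r hr =>
      ⟨r - ℓ, Nat.sub_add_cancel (not_lt.mp fun hr' => hr (h_zero r hr'))⟩
  rw [← h_shift, div_eq_mul_inv, ← Real.norm_eq_abs]
  refine tsum_of_norm_bounded ((hasSum_geometric_of_lt_one hq0 hq1).mul_left (C * q ^ ℓ))
    fun i => ?_
  calc ‖a (i + ℓ)‖ = |a (i + ℓ)| := Real.norm_eq_abs _
    _ ≤ C * q ^ (i + ℓ) := h_bound _ (Nat.le_add_left ℓ i)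
    _ = C * q ^ ℓ * q ^ i := by ring

theorem abs_wg_term_le {n k : ℕ} (hn : 0 < n) (hk : 0 < k) (π : Perm (Fin k)) (m : ℕ) :
    |(-1 : ℝ) ^ (m + 1) * factorCount k (m + 1) π / (n : ℝ) ^ (m + 1)| ≤
      2 / (k : ℝ) ^ 2 * ((k : ℝ) ^ 2 / (2 * n)) ^ (m + 1) := by
  have h_pairs : (k.choose 2 : ℝ) ≤ (k : ℝ) ^ 2 / 2 := by
    rw [Nat.cast_choose_two]
    gcongr
    nlinarith
  have h_count : (factorCount k (m + 1) π : ℝ) ≤ ((k : ℝ) ^ 2 / 2) ^ m :=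
    calc (factorCount k (m + 1) π : ℝ) ≤ (k.choose 2 : ℝ) ^ m := by
          exact_mod_cast factorCount_succ_le k m π
      _ ≤ ((k : ℝ) ^ 2 / 2) ^ m := by gcongr
  have hn' : (n : ℝ) ≠ 0 := by positivity
  have hk' : (k : ℝ) ≠ 0 := by positivity
  rw [abs_div, abs_mul, abs_pow, abs_neg, abs_one, one_pow, one_mul, Nat.abs_cast,
    abs_of_pos (by positivity)]
  calc (factorCount k (m + 1) π : ℝ) / (n : ℝ) ^ (m + 1)
      ≤ ((k : ℝ) ^ 2 / 2) ^ m / (n : ℝ) ^ (m + 1) := by gcongr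
    _ = 2 / (k : ℝ) ^ 2 * ((k : ℝ) ^ 2 / (2 * n)) ^ (m + 1) := by
      rw [div_pow, div_pow, mul_pow]
      field_simp
      ring

theorem stmt7_general (n k : ℕ) (h : k ^ 2 < 2 * n)
    (π : Equiv.Perm (Fin k)) (hπ : π ≠ 1) :
    |Wg n k π| ≤ (2 / ((n : ℝ) ^ k * (k : ℝ) ^ 2)) *
      ((k : ℝ) ^ 2 / (2 * n)) ^ (transLen π) * (1 / (1 - (k : ℝ) ^ 2 / (2 * n))) := by
  have hn : 0 < n := Nat.pos_of_ne_zero fun hn => by simp [hn] at h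
  have hk : 0 < k := Nat.pos_of_ne_zero fun hk => hπ (by subst hk; exact Subsingleton.elim _ _)
  have hq0 : 0 ≤ (k : ℝ) ^ 2 / (2 * n) := by positivity
  have hq1 : (k : ℝ) ^ 2 / (2 * n) < 1 := by
    rw [div_lt_one (by positivity)]
    exact_mod_cast h
  have h_pos := transLen_pos hπ
  have h_series := abs_tsum_le_of_geometric_tail hq0 hq1 (C := 2 / (k : ℝ) ^ 2) (ℓ := transLen π)
    (a := fun r => (-1 : ℝ) ^ r * (factorCount k r π : ℝ) / (n : ℝ) ^ r)
    (fun r hr => by simp [factorCount_eq_zero_of_lt_transLen hr])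
    (fun r hr => by
      obtain ⟨m, rfl⟩ : ∃ m, r = m + 1 := ⟨r - 1, by omega⟩
      exact abs_wg_term_le hn hk π m)
  rw [Wg, abs_mul, abs_of_nonneg (by positivity)]
  calc _ ≤ 1 / (n : ℝ) ^ k * (2 / (k : ℝ) ^ 2 * ((k : ℝ) ^ 2 / (2 * n)) ^ transLen π /
        (1 - (k : ℝ) ^ 2 / (2 * n))) := by gcongr
    _ = _ := by ring

theorem stmt7 (n k : ℕ) (hn : 0 < n) (hk : 0 < k) (h : k ^ 2 < 2 * n)
    (π : Equiv.Perm (Fin k)) (hπ : π ≠ 1) :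
    |Wg n k π| ≤ (2 / ((n : ℝ) ^ k * (k : ℝ) ^ 2)) *
      ((k : ℝ) ^ 2 / (2 * n)) ^ (transLen π) * (1 / (1 - (k : ℝ) ^ 2 / (2 * n))) :=
  stmt7_general n k h π hπ
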